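/- Let b₁, …, b_{2N} ∈ ℝ³ be a loop drive (Σ_{n=1}^{2N} (−1)^{n+1} b_n = 0), and let b' = (b₂, b₃, …, b_{2N}, b₁) be its cyclic permutation by one step. Then b' is again a loop drive and its characteristic sum is unchanged: S(b') = S(b). Consequently any cyclic permutation of the steps of a loop drive preserves its signed area and characteristic reciprocal lattice vector. -/

import Mathlib

open Matrix Finset

/-- The displacement vector after `n` steps of a 3D exchange drive:
`d_n = Σ_{k=1}^{n} (−1)^{k+1} b_k`. -/
noncomputable def disp3 (b : ℕ → Fin 3 → ℝ) (n : ℕ) : Fin 3 → ℝ :=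
  ∑ k ∈ Finset.Icc 1 n, (-1 : ℝ) ^ (k + 1) • b k

/-- The characteristic sum `S(b) = Σ_{n=1}^{2N−1} (−1)ⁿ (d_n × b_{n+1})` of a 3D
exchange drive of length `2N`. -/
noncomputable def charSum (N : ℕ) (b : ℕ → Fin 3 → ℝ) : Fin 3 → ℝ :=
  ∑ n ∈ Finset.Icc 1 (2 * N - 1), (-1 : ℝ) ^ n • ((disp3 b n) ⨯₃ (b (n + 1)))

/-!
Since `d_{n+1} - d_n = (-1)ⁿ b_{n+1}` and `d_n × d_n = 0`, the characteristic sum is the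
shoelace sum `S(b) = Σ_{n<2N} d_n × d_{n+1}` of the closed polygon `0 = d_0, d_1, …, d_{2N} = 0`.
For the rotated drive one has `d'_n = b_1 - d_{n+1}` for `n < 2N`, and `d'_{2N} = 0`: up to the
translation by `b_1` and a point reflection, the polygon of `b'` is that of `b` traversed from `d_1`.
A shoelace sum of a closed polygon changes by neither, and the boundary terms vanish because
`d_0 = d'_{2N} = 0` and `d_1 = b_1`.
-/

lemma sum_Icc_one_pred_eq_sum_range {M : Type*} [AddCommMonoid M] (g : ℕ → M) (hg : g 0 = 0)
    (L : ℕ) : ∑ n ∈ Icc 1 (L - 1), g n = ∑ n ∈ range L, g n := by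
  cases L with
  | zero => rfl
  | succ n =>
    rw [Nat.add_sub_cancel, ← Ico_add_one_right_eq_Icc, range_eq_Ico,
      sum_eq_sum_Ico_succ_bot n.succ_pos, hg, zero_add]
    rfl

section Cross

variable {R : Type*} [CommRing R]

lemma sub_cross_sub (c x y : Fin 3 → R) : (c - x) ⨯₃ (c - y) = x ⨯₃ y + c ⨯₃ (x - y) := by
  simp only [map_sub, LinearMap.sub_apply, cross_self, ← cross_anticomm x c]
  abel

lemma sum_range_sub_cross_sub (c : Fin 3 → R) (p : ℕ → Fin 3 → R) (n : ℕ) :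
    ∑ i ∈ range n, (c - p i) ⨯₃ (c - p (i + 1))
      = ∑ i ∈ range n, p i ⨯₃ p (i + 1) + c ⨯₃ (p 0 - p n) := by
  simp only [sub_cross_sub, sum_add_distrib, ← map_sum, sum_range_sub']

end Cross

@[simp]
lemma disp3_zero (b : ℕ → Fin 3 → ℝ) : disp3 b 0 = 0 := rfl

lemma disp3_succ (b : ℕ → Fin 3 → ℝ) (n : ℕ) :
    disp3 b (n + 1) = disp3 b n + (-1 : ℝ) ^ n • b (n + 1) := by
  rw [disp3, sum_Icc_succ_top (Nat.le_add_left 1 n), pow_succ, pow_succ, mul_neg_one,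
    mul_neg_one, neg_neg]
  rfl

lemma disp3_one (b : ℕ → Fin 3 → ℝ) : disp3 b 1 = b 1 := by
  simp [disp3_succ]

lemma smul_cross_eq_disp3_cross_disp3 (b : ℕ → Fin 3 → ℝ) (n : ℕ) :
    (-1 : ℝ) ^ n • (disp3 b n ⨯₃ b (n + 1)) = disp3 b n ⨯₃ disp3 b (n + 1) := by
  rw [disp3_succ, map_add, cross_self, zero_add, map_smul]

lemma charSum_eq_sum_range (N : ℕ) (b : ℕ → Fin 3 → ℝ) :
    charSum N b = ∑ n ∈ range (2 * N), disp3 b n ⨯₃ disp3 b (n + 1) := by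
  simp only [charSum, smul_cross_eq_disp3_cross_disp3]
  exact sum_Icc_one_pred_eq_sum_range _ (by simp) _

section Rotation

variable {b b' : ℕ → Fin 3 → ℝ} {M : ℕ}

lemma disp3_rotate (hb' : ∀ n, 1 ≤ n → n ≤ M → b' n = b (n + 1)) :
    ∀ n ≤ M, disp3 b' n = b 1 - disp3 b (n + 1) := by
  intro n hn
  induction n with
  | zero => simp [disp3_one]
  | succ n ih =>
    rw [disp3_succ, ih (by omega), hb' (n + 1) (by omega) hn, disp3_succ b (n + 1), pow_succ,
      mul_neg_one, neg_smul]
    abel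

lemma disp3_rotate_last (hM : Odd M) (hb' : ∀ n, 1 ≤ n → n ≤ M → b' n = b (n + 1))
    (hlast : b' (M + 1) = b 1) (hloop : disp3 b (M + 1) = 0) : disp3 b' (M + 1) = 0 := by
  rw [disp3_succ, disp3_rotate hb' M le_rfl, hloop, hlast, hM.neg_one_pow]
  simp

lemma sum_cross_disp3_rotate (hM : Odd M) (hb' : ∀ n, 1 ≤ n → n ≤ M → b' n = b (n + 1))
    (hlast : b' (M + 1) = b 1) (hloop : disp3 b (M + 1) = 0) :
    ∑ n ∈ range (M + 1), disp3 b' n ⨯₃ disp3 b' (n + 1)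
      = ∑ n ∈ range (M + 1), disp3 b n ⨯₃ disp3 b (n + 1) := by
  have hd' : ∀ n ∈ range M, disp3 b' n ⨯₃ disp3 b' (n + 1)
      = (b 1 - disp3 b (n + 1)) ⨯₃ (b 1 - disp3 b (n + 1 + 1)) := fun n hn => by
    rw [mem_range] at hn
    rw [disp3_rotate hb' n hn.le, disp3_rotate hb' (n + 1) hn]
  calc ∑ n ∈ range (M + 1), disp3 b' n ⨯₃ disp3 b' (n + 1)
      = ∑ n ∈ range M, (b 1 - disp3 b (n + 1)) ⨯₃ (b 1 - disp3 b (n + 1 + 1)) := by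
        rw [sum_range_succ, disp3_rotate_last hM hb' hlast hloop, map_zero, add_zero,
          sum_congr rfl hd']
    _ = ∑ n ∈ range M, disp3 b (n + 1) ⨯₃ disp3 b (n + 1 + 1) := by
        rw [sum_range_sub_cross_sub, disp3_one, hloop, sub_zero, cross_self, add_zero]
    _ = ∑ n ∈ range (M + 1), disp3 b n ⨯₃ disp3 b (n + 1) := by
        rw [sum_range_succ', disp3_zero, LinearMap.map_zero₂, add_zero]

end Rotation

/-- If `b₁, …, b_{2N}` is a loop drive
(`Σ_{n=1}^{2N} (−1)^{n+1} b_n = 0`) and `b' = (b₂, b₃, …, b_{2N}, b₁)` is its cyclic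
permutation by one step, then `b'` is again a loop drive and `S(b') = S(b)`; hence
cyclic permutations of a loop drive preserve the signed area and the characteristic
reciprocal lattice vector. -/
theorem stmt_7 (N : ℕ) (b b' : ℕ → Fin 3 → ℝ)
    (hloop : ∑ n ∈ Finset.Icc 1 (2 * N), (-1 : ℝ) ^ (n + 1) • b n = 0)
    (hb'₁ : ∀ n, 1 ≤ n → n ≤ 2 * N - 1 → b' n = b (n + 1))
    (hb'₂ : b' (2 * N) = b 1) :
    (∑ n ∈ Finset.Icc 1 (2 * N), (-1 : ℝ) ^ (n + 1) • b' n = 0)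
    ∧ charSum N b' = charSum N b := by
  obtain rfl | hN := Nat.eq_zero_or_pos N
  · simp [charSum]
  obtain ⟨M, hM, hodd⟩ : ∃ M, 2 * N = M + 1 ∧ Odd M := ⟨2 * N - 1, by omega, N - 1, by omega⟩
  rw [show 2 * N - 1 = M by omega] at hb'₁
  rw [hM] at hloop hb'₂
  rw [charSum_eq_sum_range, charSum_eq_sum_range, hM]
  exact ⟨disp3_rotate_last hodd hb'₁ hb'₂ hloop, sum_cross_disp3_rotate hodd hb'₁ hb'₂ hloop⟩
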